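/- For probability mass functions P_i, P_j with full support on a finite alphabet X, the minimum over all probability mass functions P on X of max{D(P‖P_i), D(P‖P_j)} equals the Chernoff information C(P_i,P_j) = -min_{λ∈[0,1]} log₂(Σ_x P_i(x)^λ P_j(x)^{1-λ}), and the minimizer has the tilted form P^λ(x) = P_i(x)^λ P_j(x)^{1-λ} / Σ_y P_i(y)^λ P_j(y)^{1-λ} with λ chosen so that D(P^λ‖P_i) = D(P^λ‖P_j). -/

import Mathlib

open Finset

/-- Base-2 KL divergence. -/
noncomputable def KL {α : Type*} [Fintype α] (P Q : α → ℝ) : ℝ :=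
  ∑ x, P x * Real.logb 2 (P x / Q x)

/-- Chernoff information with base-2 logarithm. -/
noncomputable def chernoff {α : Type*} [Fintype α] (P Q : α → ℝ) : ℝ :=
  - sInf ((fun l : ℝ => Real.logb 2 (∑ x, P x ^ l * Q x ^ (1 - l))) '' Set.Icc (0:ℝ) 1)

/-- The tilted (geometric mixture) distribution. -/
noncomputable def tilt {α : Type*} [Fintype α] (P Q : α → ℝ) (l : ℝ) : α → ℝ :=
  fun x => P x ^ l * Q x ^ (1 - l) / ∑ y, P y ^ l * Q y ^ (1 - l)

private lemma gibbs_nonneg {α : Type*} [Fintype α] (P Q : α → ℝ) (hP : ∀ x, 0 ≤ P x)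
    (hP1 : ∑ x, P x = 1) (hQ : ∀ x, 0 < Q x) (hQ1 : ∑ x, Q x = 1) :
    0 ≤ ∑ x, P x * Real.log (P x / Q x) := by
  classical
  set S := Finset.univ.filter (fun x => P x ≠ 0) with hS
  have hre : ∑ x ∈ S, P x * Real.log (P x / Q x) = ∑ x, P x * Real.log (P x / Q x) := by
    apply Finset.sum_filter_of_ne
    intro x _ hfx hPx
    exact hfx (by rw [hPx, zero_mul])
  rw [← hre]
  have hPS : ∑ x ∈ S, P x = 1 := by
    rw [hS, Finset.sum_filter_of_ne (fun x _ h => h), hP1]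
  have hQS : ∑ x ∈ S, Q x ≤ 1 := by
    rw [← hQ1]
    exact Finset.sum_le_sum_of_subset_of_nonneg (Finset.filter_subset _ _)
      (fun x _ _ => (hQ x).le)
  have hbound : ∀ x ∈ S, P x - Q x ≤ P x * Real.log (P x / Q x) := by
    intro x hx
    rw [hS, Finset.mem_filter] at hx
    have hPx : 0 < P x := (hP x).lt_of_ne (Ne.symm hx.2)
    have h := Real.log_le_sub_one_of_pos (div_pos (hQ x) hPx)
    have hlog : Real.log (P x / Q x) = - Real.log (Q x / P x) := by
      rw [Real.log_div hPx.ne' (hQ x).ne', Real.log_div (hQ x).ne' hPx.ne']; ring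
    rw [hlog]
    have hqp : Q x / P x * P x = Q x := div_mul_cancel₀ _ hPx.ne'
    nlinarith [mul_le_mul_of_nonneg_left h hPx.le]
  calc (0:ℝ) ≤ ∑ x ∈ S, (P x - Q x) := by rw [Finset.sum_sub_distrib, hPS]; linarith
    _ ≤ ∑ x ∈ S, P x * Real.log (P x / Q x) := Finset.sum_le_sum hbound

private lemma gibbs_lt {α : Type*} [Fintype α] (P Q : α → ℝ) (hP : ∀ x, 0 < P x)
    (hP1 : ∑ x, P x = 1) (hQ : ∀ x, 0 < Q x) (hQ1 : ∑ x, Q x = 1) (hne : ∃ x, Q x ≠ P x) :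
    ∑ x, P x * Real.log (Q x / P x) < 0 := by
  have hsum : ∑ x, P x * Real.log (Q x / P x) < ∑ x, (Q x - P x) := by
    apply Finset.sum_lt_sum
    · intro x _
      have h := Real.log_le_sub_one_of_pos (div_pos (hQ x) (hP x))
      have hqp : Q x / P x * P x = Q x := div_mul_cancel₀ _ (hP x).ne'
      nlinarith [mul_le_mul_of_nonneg_left h (hP x).le]
    · obtain ⟨x, hx⟩ := hne
      refine ⟨x, Finset.mem_univ x, ?_⟩
      have hne1 : Q x / P x ≠ 1 := by
        intro h
        rw [div_eq_one_iff_eq (hP x).ne'] at h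
        exact hx h
      have h := Real.log_lt_sub_one_of_pos (div_pos (hQ x) (hP x)) hne1
      have hqp : Q x / P x * P x = Q x := div_mul_cancel₀ _ (hP x).ne'
      nlinarith [mul_lt_mul_of_pos_left h (hP x)]
  rw [Finset.sum_sub_distrib, hQ1, hP1] at hsum
  linarith

theorem stmt10 {α : Type*} [Fintype α] (Pi Pj : α → ℝ)
    (hPi0 : ∀ x, 0 < Pi x) (hPi1 : ∑ x, Pi x = 1)
    (hPj0 : ∀ x, 0 < Pj x) (hPj1 : ∑ x, Pj x = 1)
    (hne : Pi ≠ Pj) :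
    IsLeast {y : ℝ | ∃ P : α → ℝ, (∀ x, 0 ≤ P x) ∧ ∑ x, P x = 1 ∧
        y = max (KL P Pi) (KL P Pj)} (chernoff Pi Pj) ∧
    ∃ l ∈ Set.Icc (0:ℝ) 1,
      KL (tilt Pi Pj l) Pi = KL (tilt Pi Pj l) Pj ∧
      max (KL (tilt Pi Pj l) Pi) (KL (tilt Pi Pj l) Pj) = chernoff Pi Pj := by
  classical
  have huniv : (Finset.univ : Finset α).Nonempty := by
    by_contra h
    rw [Finset.not_nonempty_iff_eq_empty] at h
    rw [h] at hPi1; simp at hPi1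
  set c : α → ℝ := fun x => Real.log (Pi x) with hc
  set d : α → ℝ := fun x => Real.log (Pj x) with hd
  set F : ℝ → ℝ := fun l => ∑ x, Real.exp ((c x - d x) * l + d x) with hF
  set F' : ℝ → ℝ := fun l => ∑ x, (c x - d x) * Real.exp ((c x - d x) * l + d x) with hF'
  have hterm : ∀ (l : ℝ) (x : α),
      Pi x ^ l * Pj x ^ (1 - l) = Real.exp ((c x - d x) * l + d x) := by
    intro l x
    rw [Real.rpow_def_of_pos (hPi0 x), Real.rpow_def_of_pos (hPj0 x), ← Real.exp_add]
    simp only [hc, hd]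
    ring_nf
  have hFf : ∀ l : ℝ, ∑ x, Pi x ^ l * Pj x ^ (1 - l) = F l := by
    intro l
    rw [hF]
    exact Finset.sum_congr rfl (fun x _ => hterm l x)
  have hFpos : ∀ l, 0 < F l := by
    intro l
    rw [hF]
    exact Finset.sum_pos (fun x _ => Real.exp_pos _) huniv
  have hexp_d : ∀ x, Real.exp (d x) = Pj x := fun x => Real.exp_log (hPj0 x)
  have hexp_c : ∀ x, Real.exp (c x) = Pi x := fun x => Real.exp_log (hPi0 x)
  have hF0 : F 0 = 1 := by
    rw [hF]
    simp only [mul_zero, zero_add]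
    rw [Finset.sum_congr rfl (fun x _ => hexp_d x), hPj1]
  have hF1 : F 1 = 1 := by
    rw [hF]
    simp only [mul_one, sub_add_cancel]
    rw [Finset.sum_congr rfl (fun x _ => hexp_c x), hPi1]
  have hFderiv : ∀ l, HasDerivAt F (F' l) l := by
    intro l
    rw [hF, hF']
    apply HasDerivAt.fun_sum
    intro x _
    have h1 : HasDerivAt (fun l : ℝ => (c x - d x) * l + d x) (c x - d x) l := by
      simpa using ((hasDerivAt_id l).const_mul (c x - d x)).add_const (d x)
    simpa [mul_comm] using h1.exp
  have hFdiff : Differentiable ℝ F := fun l => (hFderiv l).differentiableAt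
  have hFcont : Continuous F := hFdiff.continuous
  obtain ⟨ls, hls, hmin⟩ := isCompact_Icc.exists_isMinOn
    (Set.nonempty_Icc.mpr (by norm_num : (0:ℝ) ≤ 1)) hFcont.continuousOn
  -- derivative at 0 is negative
  have hF'0 : F' 0 < 0 := by
    have heq : F' 0 = ∑ x, Pj x * Real.log (Pi x / Pj x) := by
      rw [hF']
      apply Finset.sum_congr rfl
      intro x _
      simp only [mul_zero, zero_add]
      rw [hexp_d x, Real.log_div (hPi0 x).ne' (hPj0 x).ne']
      rw [hc, hd]
      ring
    rw [heq]
    apply gibbs_lt Pj Pi hPj0 hPj1 hPi0 hPi1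
    by_contra h
    push_neg at h
    exact hne (funext h)
  -- there is a point of (0,1) where F < 1
  have hex : ∃ l0 ∈ Set.Ioo (0:ℝ) 1, F l0 < 1 := by
    have hslope := hasDerivAt_iff_tendsto_slope.mp (hFderiv 0)
    have h1 : ∀ᶠ l in nhdsWithin (0:ℝ) {(0:ℝ)}ᶜ, slope F 0 l < 0 :=
      hslope.eventually_lt_const hF'0
    have h2 : ∀ᶠ l in nhdsWithin (0:ℝ) (Set.Ioi 0), slope F 0 l < 0 :=
      h1.filter_mono (nhdsWithin_mono 0 (fun x hx => ne_of_gt hx))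
    have h3 : ∀ᶠ l in nhdsWithin (0:ℝ) (Set.Ioi 0), l ∈ Set.Ioo (0:ℝ) 1 :=
      Filter.eventually_of_mem (Ioo_mem_nhdsGT_of_mem ⟨le_refl 0, one_pos⟩) (fun x hx => hx)
    obtain ⟨l0, hl0, hl0'⟩ := (h2.and h3).exists
    refine ⟨l0, hl0', ?_⟩
    rw [slope_def_field] at hl0
    have hpos : (0:ℝ) < l0 - 0 := by simpa using hl0'.1
    have : F l0 - F 0 < 0 := by
      by_contra hcon
      push_neg at hcon
      exact absurd hl0 (not_lt.mpr (div_nonneg hcon hpos.le))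
    rw [hF0] at this
    linarith
  obtain ⟨l0, hl0mem, hl0lt⟩ := hex
  have hFls_lt : F ls < 1 :=
    lt_of_le_of_lt (hmin (Set.Ioo_subset_Icc_self hl0mem)) hl0lt
  have hls0 : 0 < ls := by
    rcases eq_or_lt_of_le hls.1 with h | h
    · exfalso; rw [← h, hF0] at hFls_lt; exact lt_irrefl 1 hFls_lt
    · exact h
  have hls1 : ls < 1 := by
    rcases eq_or_lt_of_le hls.2 with h | h
    · exfalso; rw [h, hF1] at hFls_lt; exact lt_irrefl 1 hFls_lt
    · exact h
  have hF'ls : F' ls = 0 :=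
    (hmin.isLocalMin (Icc_mem_nhds hls0 hls1)).hasDerivAt_eq_zero (hFderiv ls)
  -- value of chernoff
  have hchern : chernoff Pi Pj = - Real.logb 2 (F ls) := by
    unfold chernoff
    have himg : (fun l : ℝ => Real.logb 2 (∑ x, Pi x ^ l * Pj x ^ (1 - l)))
        = fun l => Real.logb 2 (F l) := funext fun l => by rw [hFf l]
    rw [himg]
    congr 1
    apply le_antisymm
    · exact csInf_le ⟨Real.logb 2 (F ls), by
        rintro y ⟨l, hl, rfl⟩
        exact Real.logb_le_logb_of_le one_lt_two (hFpos ls) (hmin hl)⟩ ⟨ls, hls, rfl⟩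
    · apply le_csInf ((Set.nonempty_Icc.mpr zero_le_one).image _)
      rintro y ⟨l, hl, rfl⟩
      exact Real.logb_le_logb_of_le one_lt_two (hFpos ls) (hmin hl)
  -- tilt is a positive pmf
  have htiltpos : ∀ x, 0 < tilt Pi Pj ls x := by
    intro x
    unfold tilt
    rw [hFf ls]
    exact div_pos (mul_pos (Real.rpow_pos_of_pos (hPi0 x) _)
      (Real.rpow_pos_of_pos (hPj0 x) _)) (hFpos ls)
  have htiltsum : ∑ x, tilt Pi Pj ls x = 1 := by
    unfold tilt
    rw [← Finset.sum_div, hFf ls, div_self (hFpos ls).ne']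
  have hL : Real.log 2 ≠ 0 := (Real.log_pos one_lt_two).ne'
  have htilt_eq : ∀ x, tilt Pi Pj ls x = Real.exp ((c x - d x) * ls + d x) / F ls := by
    intro x
    unfold tilt
    rw [hterm ls x, hFf ls]
  -- key identity
  have hkey : ∀ P : α → ℝ, (∀ x, 0 ≤ P x) → ∑ x, P x = 1 →
      ls * KL P Pi + (1 - ls) * KL P Pj = KL P (tilt Pi Pj ls) - Real.logb 2 (F ls) := by
    intro P hP0 hP1
    unfold KL
    have hterm' : ∀ x, ls * (P x * Real.logb 2 (P x / Pi x))
        + (1 - ls) * (P x * Real.logb 2 (P x / Pj x))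
        = P x * Real.logb 2 (P x / tilt Pi Pj ls x) - P x * Real.logb 2 (F ls) := by
      intro x
      rcases eq_or_lt_of_le (hP0 x) with h | h
      · simp [← h]
      · have htx := htiltpos x
        have hlogtilt : Real.log (tilt Pi Pj ls x)
            = (c x - d x) * ls + d x - Real.log (F ls) := by
          rw [htilt_eq x, Real.log_div (Real.exp_pos _).ne' (hFpos ls).ne', Real.log_exp]
        unfold Real.logb
        rw [Real.log_div h.ne' (hPi0 x).ne', Real.log_div h.ne' (hPj0 x).ne',
          Real.log_div h.ne' htx.ne', hlogtilt, hc, hd]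
        field_simp
        ring
    rw [Finset.mul_sum, Finset.mul_sum, ← Finset.sum_add_distrib,
      Finset.sum_congr rfl (fun x _ => hterm' x), Finset.sum_sub_distrib,
      ← Finset.sum_mul, hP1, one_mul]
  -- equality of the two divergences at ls
  have hKLeq : KL (tilt Pi Pj ls) Pi = KL (tilt Pi Pj ls) Pj := by
    have hsum0 : ∑ x, (d x - c x) * Real.exp ((c x - d x) * ls + d x) = 0 := by
      have h2 : F' ls = ∑ x, (c x - d x) * Real.exp ((c x - d x) * ls + d x) := rfl
      have heq : ∑ x, (d x - c x) * Real.exp ((c x - d x) * ls + d x)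
          = -∑ x, (c x - d x) * Real.exp ((c x - d x) * ls + d x) := by
        rw [← Finset.sum_neg_distrib]
        exact Finset.sum_congr rfl fun x _ => by ring
      rw [heq, ← h2, hF'ls, neg_zero]
    have hdiff : KL (tilt Pi Pj ls) Pi - KL (tilt Pi Pj ls) Pj
        = (∑ x, (d x - c x) * Real.exp ((c x - d x) * ls + d x)) / (F ls * Real.log 2) := by
      unfold KL
      rw [← Finset.sum_sub_distrib, Finset.sum_div]
      apply Finset.sum_congr rfl
      intro x _
      have htx := htiltpos x
      unfold Real.logb
      rw [Real.log_div htx.ne' (hPi0 x).ne', Real.log_div htx.ne' (hPj0 x).ne',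
        htilt_eq x, hc, hd]
      have hFne := (hFpos ls).ne'
      field_simp
      ring
    rw [hsum0, zero_div] at hdiff
    linarith
  -- the minimum value is attained at tilt
  have hmax : max (KL (tilt Pi Pj ls) Pi) (KL (tilt Pi Pj ls) Pj) = chernoff Pi Pj := by
    rw [hKLeq, max_self, hchern]
    have h1 := hkey (tilt Pi Pj ls) (fun x => (htiltpos x).le) htiltsum
    have hKLtt : KL (tilt Pi Pj ls) (tilt Pi Pj ls) = 0 := by
      unfold KL
      apply Finset.sum_eq_zero
      intro x _
      rw [div_self (htiltpos x).ne', Real.logb_one, mul_zero]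
    rw [hKLtt, hKLeq] at h1
    have hcomb : ls * KL (tilt Pi Pj ls) Pj + (1 - ls) * KL (tilt Pi Pj ls) Pj
        = KL (tilt Pi Pj ls) Pj := by ring
    linarith
  -- lower bound
  have hlb : ∀ y ∈ {y : ℝ | ∃ P : α → ℝ, (∀ x, 0 ≤ P x) ∧ ∑ x, P x = 1 ∧
      y = max (KL P Pi) (KL P Pj)}, chernoff Pi Pj ≤ y := by
    rintro y ⟨P, hP0, hP1, rfl⟩
    have h1 := hkey P hP0 hP1
    have h2 : 0 ≤ KL P (tilt Pi Pj ls) := by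
      unfold KL
      have hg := gibbs_nonneg P (tilt Pi Pj ls) hP0 hP1 htiltpos htiltsum
      have hrw : ∑ x, P x * Real.logb 2 (P x / tilt Pi Pj ls x)
          = (∑ x, P x * Real.log (P x / tilt Pi Pj ls x)) / Real.log 2 := by
        rw [Finset.sum_div]
        apply Finset.sum_congr rfl
        intro x _
        unfold Real.logb
        ring
      rw [hrw]
      exact div_nonneg hg (Real.log_nonneg one_le_two)
    have h3 : ls * KL P Pi + (1 - ls) * KL P Pj ≤ max (KL P Pi) (KL P Pj) := by
      have ha := mul_le_mul_of_nonneg_left (le_max_left (KL P Pi) (KL P Pj)) hls0.le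
      have hb := mul_le_mul_of_nonneg_left (le_max_right (KL P Pi) (KL P Pj))
        (by linarith : (0:ℝ) ≤ 1 - ls)
      nlinarith
    rw [hchern]
    linarith
  exact ⟨⟨⟨tilt Pi Pj ls, fun x => (htiltpos x).le, htiltsum, hmax.symm⟩, hlb⟩,
    ls, hls, hKLeq, hmax⟩
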